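/- Fix d ≥ 2. For the homogeneous map H = (0, x₁ᵈ, x₁^{d−1}x₂, x₁^{d−2}x₂², 2x₁^{d−2}x₂x₃ − x₁^{d−1}x₄) in dimension 5 over ℚ, the Jacobian JH has ordinary nilpotency index 3 and strong nilpotency index 4. -/

import Mathlib

/-!
Index coordinates from `0`. Each `Hᵢ` involves only the variables `xⱼ` with `j < i`, and `H₃`
does not involve `x₂`, so the Jacobian at any point is strictly lower triangular with vanishing
`(3,2)` entry. In a product of such matrices a nonzero entry needs a strictly decreasing
chain of indices avoiding the step `3 → 2`: there is no such chain of length four, and the only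
one of length three is `4 → {2, 3} → 1 → 0`. Hence a product of three of them is concentrated in
the `(4,0)` entry, with coefficient
`(A₄₂ B₂₁ + A₄₃ B₃₁) C₁₀ = 2 (a₀ b₀)^{d-2} (a₁ b₀ - a₀ b₁) · d c₀^{d-1}` for Jacobians taken at
points `a, b, c`. This vanishes for `a = b` but not for independent points, while
`(JH)²₂₀ = d x₀^{2d-2} ≠ 0`.
-/

open MvPolynomial

/-- Substitute the `i`-th fresh tuple of indeterminates for `x` in every entry of `M`. -/
noncomputable def substN {K : Type} [CommRing K] {n m : ℕ}
    (M : Matrix (Fin m) (Fin m) (MvPolynomial (Fin n) K)) (i : ℕ) :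
    Matrix (Fin m) (Fin m) (MvPolynomial (ℕ × Fin n) K) :=
  M.map (rename fun k => (i, k))

/-- The Jacobian matrix `(∂H_i/∂x_j)` of a polynomial map `H`. -/
noncomputable def jac {K : Type} [CommRing K] {n : ℕ}
    (H : Fin n → MvPolynomial (Fin n) K) :
    Matrix (Fin n) (Fin n) (MvPolynomial (Fin n) K) :=
  Matrix.of fun i j => pderiv j (H i)

/-- The homogeneous degree-`d` map
`H = (0, x₁ᵈ, x₁^{d−1}x₂, x₁^{d−2}x₂², 2x₁^{d−2}x₂x₃ − x₁^{d−1}x₄)` in dimension 5 over ℚ. -/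
noncomputable def H10 (d : ℕ) : Fin 5 → MvPolynomial (Fin 5) ℚ :=
  ![0, X 0 ^ d, X 0 ^ (d - 1) * X 1, X 0 ^ (d - 2) * X 1 ^ 2,
    2 * X 0 ^ (d - 2) * X 1 * X 2 - X 0 ^ (d - 1) * X 3]

open Matrix

@[simp]
lemma Derivation.map_ofNat {R A M : Type*} [CommSemiring R] [CommSemiring A] [Algebra R A]
    [AddCommMonoid M] [Module A M] [Module R M] (D : Derivation R A M) (n : ℕ) [n.AtLeastTwo] :
    D (no_index (OfNat.ofNat n : A)) = 0 := by
  rw [← Nat.cast_ofNat]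
  exact D.map_natCast n

def IsStrictLowerZero32 {R : Type*} [Zero R] (A : Matrix (Fin 5) (Fin 5) R) : Prop :=
  ∀ i j, i ≤ j ∨ (i = 3 ∧ j = 2) → A i j = 0

namespace IsStrictLowerZero32

lemma map {R S : Type*} [Zero R] [Zero S] {A : Matrix (Fin 5) (Fin 5) R}
    (hA : IsStrictLowerZero32 A) (f : R → S) (hf : f 0 = 0) : IsStrictLowerZero32 (A.map f) :=
  fun i j h => by rw [map_apply, hA i j h, hf]

variable {R : Type*} [Semiring R] {A B C : Matrix (Fin 5) (Fin 5) R}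

lemma mul_apply_two_zero (hA : IsStrictLowerZero32 A) (hB : IsStrictLowerZero32 B) :
    (A * B) 2 0 = A 2 1 * B 1 0 := by
  unfold IsStrictLowerZero32 at hA hB
  simp (disch := decide) [mul_apply, Fin.sum_univ_five, hA, hB]

lemma mul_mul (hA : IsStrictLowerZero32 A) (hB : IsStrictLowerZero32 B)
    (hC : IsStrictLowerZero32 C) :
    A * B * C = single 4 0 ((A 4 2 * B 2 1 + A 4 3 * B 3 1) * C 1 0) := by
  unfold IsStrictLowerZero32 at hA hB hC
  ext i j
  simp only [mul_apply, Fin.sum_univ_five]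
  fin_cases i <;> fin_cases j <;> simp (disch := decide) [hA, hB, hC, add_mul]

lemma single_mul (hA : IsStrictLowerZero32 A) (i : Fin 5) (c : R) : single i 0 c * A = 0 := by
  ext k j
  simp [single_apply, mul_apply, ite_and, hA 0 j (Or.inl (Fin.zero_le j))]

end IsStrictLowerZero32

lemma isStrictLowerZero32_jac_H10 (d : ℕ) : IsStrictLowerZero32 (jac (H10 d)) := by
  intro i j
  fin_cases i <;> fin_cases j <;> simp [jac, H10]

section JacobianEntries

variable (d : ℕ)

lemma jac_H10_one_zero : jac (H10 d) 1 0 = (d : MvPolynomial (Fin 5) ℚ) * X 0 ^ (d - 1) := by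
  simp [jac, H10]

lemma jac_H10_two_one : jac (H10 d) 2 1 = X 0 ^ (d - 1) := by
  simp [jac, H10]

lemma jac_H10_three_one : jac (H10 d) 3 1 = 2 * X 0 ^ (d - 2) * X 1 := by
  simp [jac, H10]
  ring

lemma jac_H10_four_two : jac (H10 d) 4 2 = 2 * X 0 ^ (d - 2) * X 1 := by
  simp [jac, H10]

lemma jac_H10_four_three : jac (H10 d) 4 3 = -X 0 ^ (d - 1) := by
  simp [jac, H10]

lemma jac_H10_four_two_mul_add :
    jac (H10 d) 4 2 * jac (H10 d) 2 1 + jac (H10 d) 4 3 * jac (H10 d) 3 1 = 0 := by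
  rw [jac_H10_four_two, jac_H10_two_one, jac_H10_four_three, jac_H10_three_one]
  ring

end JacobianEntries

theorem stmt10 (d : ℕ) (hd : 2 ≤ d) :
    (jac (H10 d)) ^ 3 = 0 ∧ (jac (H10 d)) ^ 2 ≠ 0 ∧
    substN (jac (H10 d)) 3 * substN (jac (H10 d)) 2 *
      substN (jac (H10 d)) 1 * substN (jac (H10 d)) 0 = 0 ∧
    substN (jac (H10 d)) 2 * substN (jac (H10 d)) 1 * substN (jac (H10 d)) 0 ≠ 0 := by
  have hd0 : d ≠ 0 := by omega
  have hJ := isStrictLowerZero32_jac_H10 d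
  have hS : ∀ t, IsStrictLowerZero32 (substN (jac (H10 d)) t) := fun t => hJ.map _ (map_zero _)
  refine ⟨?_, ?_, ?_, ?_⟩
  · rw [pow_three', hJ.mul_mul hJ hJ, jac_H10_four_two_mul_add, zero_mul, single_zero]
  · intro h
    have h20 := congrFun₂ h 2 0
    rw [sq, hJ.mul_apply_two_zero hJ, jac_H10_two_one, jac_H10_one_zero] at h20
    simp [hd0] at h20
  · rw [(hS 3).mul_mul (hS 2) (hS 1), (hS 0).single_mul]
  · rw [(hS 2).mul_mul (hS 1) (hS 0)]
    intro h
    -- at `y⁽¹⁾₁ = 0` and all other coordinates `1`, the `(4,0)` entry is `2d`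
    have h40 := congrArg (eval fun p => if p = (1, 1) then (0 : ℚ) else 1) (congrFun₂ h 4 0)
    simp [substN, eval_rename, Function.comp_def, jac_H10_four_two, jac_H10_two_one,
      jac_H10_four_three, jac_H10_three_one, jac_H10_one_zero, hd0] at h40
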